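/- Let G = ((U,V), E) be a bipartite graph with |U| = M and |V| = N, and let U* × V* ⊆ E be the vertex set of a biclique of G with |U*| = m ≥ 1 and |V*| = n ≥ 1. Let ū ∈ R^M and v̄ ∈ R^N be the characteristic vectors of U* and V*, and let X* = ū v̄ᵀ. Suppose there exist W ∈ R^{M×N}, λ ∈ R^{M×N}, and μ ≥ 0 such that W v̄ = 0, ūᵀ W = 0, ‖W‖ ≤ 1, and ū v̄ᵀ/√(mn) + W = μ e eᵀ + Σ_{(i,j) ∉ E} λ_{ij} e_i e_jᵀ. Then X* is an optimal solution of the biclique relaxation (B), and G does not contain any biclique with more than mn edges. If moreover ‖W‖ < 1 and μ > 0, then X* is the unique optimal solution of (B) and U* × V* is the unique biclique of G with mn edges. -/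

import Mathlib

/-!
`Y = X⋆ / √(mn) + W` is a dual certificate. As `W` kills `v̄` and `ūᵀ`, `Y` acts on `span v̄`
as the isometry `x ↦ (v̄ ⬝ x) ū / √(mn)` and on its orthogonal complement as `W`, so `‖Y‖ ≤ 1`,
and if `‖W‖ < 1` then `|Y x| = |x|` only for `x ∈ span v̄`. By the KKT identity `Y = μ e eᵀ + Λ`,
for feasible `X` we get `⟨Y, X⟩ = μ ∑ X ≥ μ m n = √(mn) = ‖X⋆‖_*` (pairing `Y` with `X⋆` itself
determines `μ`), while `⟨Y, X⟩ ≤ ‖Y‖ ‖X‖_* ≤ ‖X‖_*` by duality of the spectral and nuclear norms.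
Equality in that duality forces every right singular vector of `X` with nonzero singular value
into `span v̄`, so `X` is a multiple of `ū v̄ᵀ`. A biclique `I × J` rescaled to total weight `mn`
is feasible with nuclear norm `mn / √(|I| |J|)`, which yields both statements about bicliques.
-/

open Matrix

/-- The spectral norm (largest singular value) of a real matrix. -/
noncomputable def matSpectralNorm {m n : Type*} [Fintype m] [Fintype n] [DecidableEq n]
    (A : Matrix m n ℝ) : ℝ :=
  ‖LinearMap.toContinuousLinearMap (Matrix.toEuclideanLin A)‖

/-- The nuclear norm (sum of singular values) of a real matrix. -/
noncomputable def nuclearNorm {m n : Type*} [Fintype m] [Fintype n] [DecidableEq n]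
    (A : Matrix m n ℝ) : ℝ :=
  ∑ j, Real.sqrt ((Matrix.isHermitian_conjTranspose_mul_self A).eigenvalues j)

/-- The characteristic vector of a finite set of indices. -/
def charVec {ι : Type*} [DecidableEq ι] (S : Finset ι) : ι → ℝ :=
  fun i => if i ∈ S then 1 else 0

/-- Feasibility for the relaxation (R): `∑_{i,j} X_{ij} ≥ mn` and `X_{ij} = 0` for all
`(i,j)` in the complement of `E`. -/
def FeasR {M N : ℕ} (E : Set (Fin M × Fin N)) (m n : ℕ)
    (X : Matrix (Fin M) (Fin N) ℝ) : Prop :=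
  (m : ℝ) * n ≤ (∑ i, ∑ j, X i j) ∧ ∀ i j, (i, j) ∉ E → X i j = 0

lemma dotProduct_self_nonneg {κ : Type*} [Fintype κ] (v : κ → ℝ) : 0 ≤ v ⬝ᵥ v :=
  Fintype.sum_nonneg fun _ => mul_self_nonneg _

lemma norm_toLp_eq_sqrt_dotProduct {κ : Type*} [Fintype κ] (v : κ → ℝ) :
    ‖WithLp.toLp 2 v‖ = √(v ⬝ᵥ v) := by
  simp [EuclideanSpace.norm_eq, dotProduct, sq]

lemma dotProduct_le_of_dotProduct_self_le_one {ι : Type*} [Fintype ι] {y z : ι → ℝ} {σ : ℝ}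
    (hσ : 0 ≤ σ) (hy : y ⬝ᵥ y ≤ 1) (hz : z ⬝ᵥ z = σ ^ 2) : y ⬝ᵥ z ≤ σ := by
  have h := dotProduct_self_nonneg (z - σ • y)
  simp only [sub_dotProduct, dotProduct_sub, smul_dotProduct, dotProduct_smul, smul_eq_mul,
    dotProduct_comm z y, hz] at h
  rcases hσ.eq_or_lt with rfl | hσ
  · simp_all
  · nlinarith

lemma eq_smul_of_dotProduct_eq {ι : Type*} [Fintype ι] {y z : ι → ℝ} {σ : ℝ}
    (hy : y ⬝ᵥ y ≤ 1) (hz : z ⬝ᵥ z = σ ^ 2) (h : y ⬝ᵥ z = σ) : z = σ • y := by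
  have hd : (z - σ • y) ⬝ᵥ (z - σ • y) = σ ^ 2 * (y ⬝ᵥ y - 1) := by
    simp only [sub_dotProduct, dotProduct_sub, smul_dotProduct, dotProduct_smul, smul_eq_mul,
      dotProduct_comm z y, hz, h]
    ring
  have h0 : (z - σ • y) ⬝ᵥ (z - σ • y) = 0 :=
    le_antisymm (hd ▸ mul_nonpos_of_nonneg_of_nonpos (sq_nonneg σ) (by linarith))
      (dotProduct_self_nonneg _)
  exact sub_eq_zero.mp (dotProduct_self_eq_zero.mp h0)

section SpectralNorm

variable {ι κ : Type*} [Fintype ι] [Fintype κ] [DecidableEq κ]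

lemma matSpectralNorm_nonneg (A : Matrix ι κ ℝ) : 0 ≤ matSpectralNorm A := norm_nonneg _

lemma dotProduct_mulVec_self_le (A : Matrix ι κ ℝ) (x : κ → ℝ) :
    (A *ᵥ x) ⬝ᵥ (A *ᵥ x) ≤ matSpectralNorm A ^ 2 * (x ⬝ᵥ x) := by
  have h := (LinearMap.toContinuousLinearMap (toEuclideanLin A)).le_opNorm (WithLp.toLp 2 x)
  simp only [LinearMap.coe_toContinuousLinearMap', toLpLin_toLp, toLin'_apply,
    norm_toLp_eq_sqrt_dotProduct] at h
  have hx := dotProduct_self_nonneg x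
  rw [← Real.sqrt_le_sqrt_iff (by positivity), Real.sqrt_mul' _ hx,
    Real.sqrt_sq (matSpectralNorm_nonneg A)]
  exact h

lemma matSpectralNorm_le_of_dotProduct_mulVec_self_le (A : Matrix ι κ ℝ) {c : ℝ} (hc : 0 ≤ c)
    (h : ∀ x, (A *ᵥ x) ⬝ᵥ (A *ᵥ x) ≤ c ^ 2 * (x ⬝ᵥ x)) : matSpectralNorm A ≤ c := by
  refine ContinuousLinearMap.opNorm_le_bound _ hc fun x => ?_
  simp only [LinearMap.coe_toContinuousLinearMap', toLpLin_apply,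
    norm_toLp_eq_sqrt_dotProduct]
  rw [← WithLp.toLp_ofLp (p := 2) x, norm_toLp_eq_sqrt_dotProduct, ← Real.sqrt_sq hc,
    ← Real.sqrt_mul (sq_nonneg c)]
  exact Real.sqrt_le_sqrt (h _)

lemma dotProduct_mulVec_self_le_of_matSpectralNorm_le_one {Y : Matrix ι κ ℝ}
    (hY : matSpectralNorm Y ≤ 1) (x : κ → ℝ) : (Y *ᵥ x) ⬝ᵥ (Y *ᵥ x) ≤ x ⬝ᵥ x := by
  have h := dotProduct_mulVec_self_le Y x
  have : matSpectralNorm Y ^ 2 ≤ 1 := pow_le_one₀ (matSpectralNorm_nonneg Y) hY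
  nlinarith [dotProduct_self_nonneg x]

end SpectralNorm

section SingularVectors

variable {ι κ : Type*} [Fintype ι] [Fintype κ] [DecidableEq κ]

noncomputable def rightSingularVector (X : Matrix ι κ ℝ) (j : κ) : κ → ℝ :=
  (isHermitian_conjTranspose_mul_self X).eigenvectorBasis j

noncomputable def singularValue (X : Matrix ι κ ℝ) (j : κ) : ℝ :=
  √((isHermitian_conjTranspose_mul_self X).eigenvalues j)

lemma nuclearNorm_eq_sum_singularValue (X : Matrix ι κ ℝ) :
    nuclearNorm X = ∑ j, singularValue X j := rfl

lemma singularValue_nonneg (X : Matrix ι κ ℝ) (j : κ) : 0 ≤ singularValue X j :=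
  Real.sqrt_nonneg _

lemma sum_dotProduct_rightSingularVector_mul (X : Matrix ι κ ℝ) (a b : κ → ℝ) :
    ∑ j, (a ⬝ᵥ rightSingularVector X j) * (b ⬝ᵥ rightSingularVector X j) = a ⬝ᵥ b := by
  have h := ((isHermitian_conjTranspose_mul_self X).eigenvectorBasis).sum_inner_mul_inner
    (WithLp.toLp 2 a) (WithLp.toLp 2 b)
  simp only [EuclideanSpace.inner_eq_star_dotProduct, star_trivial] at h
  simpa [rightSingularVector, dotProduct_comm] using h

lemma dotProduct_rightSingularVector_self (X : Matrix ι κ ℝ) (j : κ) :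
    rightSingularVector X j ⬝ᵥ rightSingularVector X j = 1 := by
  have h := ((isHermitian_conjTranspose_mul_self X).eigenvectorBasis).orthonormal.1 j
  have h' : ‖WithLp.toLp 2 (rightSingularVector X j)‖ = 1 := h
  rwa [norm_toLp_eq_sqrt_dotProduct, Real.sqrt_eq_one] at h'

lemma mulVec_rightSingularVector_dotProduct_self (X : Matrix ι κ ℝ) (j : κ) :
    (X *ᵥ rightSingularVector X j) ⬝ᵥ (X *ᵥ rightSingularVector X j) = singularValue X j ^ 2 := by
  have hA := isHermitian_conjTranspose_mul_self X
  rw [singularValue, Real.sq_sqrt ((posSemidef_conjTranspose_mul_self X).eigenvalues_nonneg j),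
    dotProduct_mulVec, ← mulVec_transpose, mulVec_mulVec, ← conjTranspose_eq_transpose_of_trivial,
    rightSingularVector, hA.mulVec_eigenvectorBasis j, smul_dotProduct, smul_eq_mul]
  exact mul_right_eq_self₀.mpr (.inl (dotProduct_rightSingularVector_self X j))

lemma sum_vecMulVec_mulVec_rightSingularVector (X : Matrix ι κ ℝ) :
    ∑ j, vecMulVec (X *ᵥ rightSingularVector X j) (rightSingularVector X j) = X := by
  ext i k
  have h := sum_dotProduct_rightSingularVector_mul X (X i) (Pi.single k 1)
  simp only [dotProduct_single, mul_one] at h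
  simpa [vecMulVec_apply, mulVec, Matrix.sum_apply] using h

lemma sum_sum_mul_eq_sum_dotProduct (X Y : Matrix ι κ ℝ) :
    ∑ i, ∑ k, Y i k * X i k =
      ∑ j, (Y *ᵥ rightSingularVector X j) ⬝ᵥ (X *ᵥ rightSingularVector X j) := by
  calc ∑ i, ∑ k, Y i k * X i k = ∑ i, Y i ⬝ᵥ X i := rfl
    _ = ∑ i, ∑ j, (Y i ⬝ᵥ rightSingularVector X j) * (X i ⬝ᵥ rightSingularVector X j) := by
      simp only [sum_dotProduct_rightSingularVector_mul]
    _ = _ := Finset.sum_comm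

end SingularVectors

section Duality

variable {ι κ : Type*} [Fintype ι] [Fintype κ] [DecidableEq κ]

lemma dotProduct_mulVec_rightSingularVector_le {X Y : Matrix ι κ ℝ} (hY : matSpectralNorm Y ≤ 1)
    (j : κ) :
    (Y *ᵥ rightSingularVector X j) ⬝ᵥ (X *ᵥ rightSingularVector X j) ≤ singularValue X j := by
  refine dotProduct_le_of_dotProduct_self_le_one (singularValue_nonneg X j) ?_
    (mulVec_rightSingularVector_dotProduct_self X j)
  simpa only [dotProduct_rightSingularVector_self] using
    dotProduct_mulVec_self_le_of_matSpectralNorm_le_one hY (rightSingularVector X j)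

theorem sum_sum_mul_le_nuclearNorm {Y : Matrix ι κ ℝ} (hY : matSpectralNorm Y ≤ 1)
    (X : Matrix ι κ ℝ) : ∑ i, ∑ k, Y i k * X i k ≤ nuclearNorm X := by
  rw [sum_sum_mul_eq_sum_dotProduct, nuclearNorm_eq_sum_singularValue]
  exact Finset.sum_le_sum fun j _ => dotProduct_mulVec_rightSingularVector_le hY j

lemma vecMulVec_mulVec_rightSingularVector_eq {X Y : Matrix ι κ ℝ} {b : κ → ℝ}
    (hY : matSpectralNorm Y ≤ 1) (hYb : ∀ x, (Y *ᵥ x) ⬝ᵥ (Y *ᵥ x) = x ⬝ᵥ x → ∃ s : ℝ, x = s • b)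
    {j : κ} (hj : (Y *ᵥ rightSingularVector X j) ⬝ᵥ (X *ᵥ rightSingularVector X j) =
      singularValue X j) :
    vecMulVec (X *ᵥ rightSingularVector X j) (rightSingularVector X j) =
      (singularValue X j / (b ⬝ᵥ b)) • vecMulVec (Y *ᵥ b) b := by
  set v := rightSingularVector X j
  set σ := singularValue X j
  have hv : v ⬝ᵥ v = 1 := dotProduct_rightSingularVector_self X j
  have hYv : (Y *ᵥ v) ⬝ᵥ (Y *ᵥ v) ≤ 1 :=
    hv ▸ dotProduct_mulVec_self_le_of_matSpectralNorm_le_one hY v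
  have hXv : X *ᵥ v = σ • Y *ᵥ v :=
    eq_smul_of_dotProduct_eq hYv (mulVec_rightSingularVector_dotProduct_self X j) hj
  rcases eq_or_ne σ 0 with hσ | hσ
  · simp [hXv, hσ]
  have hYv1 : (Y *ᵥ v) ⬝ᵥ (Y *ᵥ v) = v ⬝ᵥ v := by
    have h : (X *ᵥ v) ⬝ᵥ (X *ᵥ v) = σ ^ 2 := mulVec_rightSingularVector_dotProduct_self X j
    rw [hXv, smul_dotProduct, dotProduct_smul, smul_eq_mul, smul_eq_mul, ← mul_assoc, ← sq] at h
    rw [hv]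
    exact (mul_right_eq_self₀.mp h).resolve_right (pow_ne_zero 2 hσ)
  obtain ⟨s, hs⟩ := hYb v hYv1
  have hsb : s ^ 2 * (b ⬝ᵥ b) = 1 := by
    rw [← hv, hs, smul_dotProduct, dotProduct_smul, smul_eq_mul, smul_eq_mul, sq, mul_assoc]
  have hbb : b ⬝ᵥ b ≠ 0 := right_ne_zero_of_mul_eq_one hsb
  rw [hXv, hs, mulVec_smul, smul_vecMulVec, smul_vecMulVec, vecMulVec_smul, smul_smul, smul_smul]
  congr 1
  field_simp
  linear_combination hsb

theorem eq_smul_vecMulVec_mulVec_of_sum_sum_mul_eq_nuclearNorm {X Y : Matrix ι κ ℝ} {b : κ → ℝ}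
    (hY : matSpectralNorm Y ≤ 1) (hYb : ∀ x, (Y *ᵥ x) ⬝ᵥ (Y *ᵥ x) = x ⬝ᵥ x → ∃ s : ℝ, x = s • b)
    (hX : ∑ i, ∑ k, Y i k * X i k = nuclearNorm X) :
    X = (nuclearNorm X / (b ⬝ᵥ b)) • vecMulVec (Y *ᵥ b) b := by
  rw [sum_sum_mul_eq_sum_dotProduct, nuclearNorm_eq_sum_singularValue] at hX
  have hj := (Finset.sum_eq_sum_iff_of_le fun j _ =>
    dotProduct_mulVec_rightSingularVector_le (X := X) hY j).mp hX
  conv_lhs => rw [← sum_vecMulVec_mulVec_rightSingularVector X]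
  rw [Finset.sum_congr rfl fun j hj' => vecMulVec_mulVec_rightSingularVector_eq hY hYb (hj j hj'),
    ← Finset.sum_smul, ← Finset.sum_div, nuclearNorm_eq_sum_singularValue]

end Duality

lemma sum_sqrt_eq_sqrt_sum_of_subsingleton {κ : Type*} [Fintype κ] {f : κ → ℝ}
    (h : {j | f j ≠ 0}.Subsingleton) : ∑ j, √(f j) = √(∑ j, f j) := by
  by_cases hf : ∃ j₀, f j₀ ≠ 0
  · obtain ⟨j₀, hj₀⟩ := hf
    have hzero : ∀ j ≠ j₀, f j = 0 := fun j hj => not_not.mp fun hfj => hj (h hfj hj₀)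
    rw [Finset.sum_eq_single j₀ (fun j _ hj => by simp [hzero j hj]) (by simp),
      Finset.sum_eq_single j₀ (fun j _ hj => hzero j hj) (by simp)]
  · simp_all

lemma nuclearNorm_eq_sqrt_trace_of_rank_le_one {ι κ : Type*} [Fintype ι] [Fintype κ]
    [DecidableEq κ] {X : Matrix ι κ ℝ} (hX : X.rank ≤ 1) :
    nuclearNorm X = √(Xᴴ * X).trace := by
  have hA := isHermitian_conjTranspose_mul_self X
  have hcard : Fintype.card {j // hA.eigenvalues j ≠ 0} ≤ 1 := by
    rw [← hA.rank_eq_card_non_zero_eigs, rank_conjTranspose_mul_self]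
    exact hX
  have hsub : {j | hA.eigenvalues j ≠ 0}.Subsingleton := fun i hi j hj =>
    congrArg Subtype.val (Fintype.card_le_one_iff.mp hcard ⟨i, hi⟩ ⟨j, hj⟩)
  rw [nuclearNorm, sum_sqrt_eq_sqrt_sum_of_subsingleton hsub, hA.trace_eq_sum_eigenvalues]
  rfl

lemma nuclearNorm_vecMulVec {ι κ : Type*} [Fintype ι] [Fintype κ] [DecidableEq κ]
    (a : ι → ℝ) (b : κ → ℝ) : nuclearNorm (vecMulVec a b) = √((a ⬝ᵥ a) * (b ⬝ᵥ b)) := by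
  rw [nuclearNorm_eq_sqrt_trace_of_rank_le_one (rank_vecMulVec_le a b),
    conjTranspose_eq_transpose_of_trivial, transpose_vecMulVec, vecMulVec_mul_vecMulVec,
    trace_vecMulVec, dotProduct_smul, smul_eq_mul]

lemma smul_vecMulVec_add_mulVec {ι κ : Type*} [Fintype κ] {a : ι → ℝ} {b : κ → ℝ} {c : ℝ}
    {W : Matrix ι κ ℝ} (hWb : W *ᵥ b = 0) :
    (c • vecMulVec a b + W) *ᵥ b = (c * (b ⬝ᵥ b)) • a := by
  rw [add_mulVec, smul_mulVec, vecMulVec_mulVec, hWb, add_zero, op_smul_eq_smul, smul_smul]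

section RankOnePerturbation

variable {ι κ : Type*} [Fintype ι] [Fintype κ] [DecidableEq κ] {a : ι → ℝ} {b : κ → ℝ}
  {c : ℝ} {W : Matrix ι κ ℝ}

lemma dotProduct_mulVec_self_add_le (hc : c ^ 2 * (a ⬝ᵥ a) * (b ⬝ᵥ b) = 1) (hWb : W *ᵥ b = 0)
    (haW : a ᵥ* W = 0) {x w : κ → ℝ} {s : ℝ} (hx : x = s • b + w) (hbw : b ⬝ᵥ w = 0) :
    ((c • vecMulVec a b + W) *ᵥ x) ⬝ᵥ ((c • vecMulVec a b + W) *ᵥ x) +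
      (1 - matSpectralNorm W ^ 2) * (w ⬝ᵥ w) ≤ x ⬝ᵥ x := by
  have hYx : (c • vecMulVec a b + W) *ᵥ x = (c * s * (b ⬝ᵥ b)) • a + W *ᵥ w := by
    rw [hx, add_mulVec, smul_mulVec, vecMulVec_mulVec, mulVec_add, mulVec_smul, hWb, smul_zero,
      zero_add, dotProduct_add, dotProduct_smul, hbw, smul_eq_mul, add_zero, op_smul_eq_smul,
      smul_smul, mul_assoc]
  have haWw : a ⬝ᵥ (W *ᵥ w) = 0 := by rw [dotProduct_mulVec, haW, zero_dotProduct]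
  have hWw := dotProduct_mulVec_self_le W w
  rw [hYx, hx]
  simp only [add_dotProduct, dotProduct_add, smul_dotProduct, dotProduct_smul, smul_eq_mul,
    haWw, dotProduct_comm (W *ᵥ w) a, dotProduct_comm w b, hbw]
  linear_combination hWw + s ^ 2 * (b ⬝ᵥ b) * hc

lemma exists_dotProduct_self_add_le (hc : c ^ 2 * (a ⬝ᵥ a) * (b ⬝ᵥ b) = 1) (hWb : W *ᵥ b = 0)
    (haW : a ᵥ* W = 0) (x : κ → ℝ) : ∃ s : ℝ,
    ((c • vecMulVec a b + W) *ᵥ x) ⬝ᵥ ((c • vecMulVec a b + W) *ᵥ x) +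
      (1 - matSpectralNorm W ^ 2) * ((x - s • b) ⬝ᵥ (x - s • b)) ≤ x ⬝ᵥ x := by
  have hbb : b ⬝ᵥ b ≠ 0 := right_ne_zero_of_mul_eq_one hc
  refine ⟨(b ⬝ᵥ x) / (b ⬝ᵥ b), dotProduct_mulVec_self_add_le hc hWb haW (by abel) ?_⟩
  rw [dotProduct_sub, dotProduct_smul, smul_eq_mul, div_mul_cancel₀ _ hbb, sub_self]

lemma matSpectralNorm_smul_vecMulVec_add_le_one (hc : c ^ 2 * (a ⬝ᵥ a) * (b ⬝ᵥ b) = 1)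
    (hWb : W *ᵥ b = 0) (haW : a ᵥ* W = 0) (hW : matSpectralNorm W ≤ 1) :
    matSpectralNorm (c • vecMulVec a b + W) ≤ 1 := by
  refine matSpectralNorm_le_of_dotProduct_mulVec_self_le _ zero_le_one fun x => ?_
  obtain ⟨s, hs⟩ := exists_dotProduct_self_add_le hc hWb haW x
  have : 0 ≤ (1 - matSpectralNorm W ^ 2) * ((x - s • b) ⬝ᵥ (x - s • b)) :=
    mul_nonneg (sub_nonneg.mpr (pow_le_one₀ (matSpectralNorm_nonneg W) hW))
      (dotProduct_self_nonneg _)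
  linarith

lemma exists_eq_smul_of_dotProduct_mulVec_self_eq (hc : c ^ 2 * (a ⬝ᵥ a) * (b ⬝ᵥ b) = 1)
    (hWb : W *ᵥ b = 0) (haW : a ᵥ* W = 0) (hW : matSpectralNorm W < 1) {x : κ → ℝ}
    (hx : ((c • vecMulVec a b + W) *ᵥ x) ⬝ᵥ ((c • vecMulVec a b + W) *ᵥ x) = x ⬝ᵥ x) :
    ∃ s : ℝ, x = s • b := by
  obtain ⟨s, hs⟩ := exists_dotProduct_self_add_le hc hWb haW x
  have hW2 : 0 < 1 - matSpectralNorm W ^ 2 := by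
    nlinarith [matSpectralNorm_nonneg W]
  have h0 : (x - s • b) ⬝ᵥ (x - s • b) = 0 :=
    le_antisymm (nonpos_of_mul_nonpos_right (by linarith) hW2) (dotProduct_self_nonneg _)
  exact ⟨s, sub_eq_zero.mp (dotProduct_self_eq_zero.mp h0)⟩

theorem eq_smul_vecMulVec_of_sum_sum_mul_eq_nuclearNorm (hc : c ^ 2 * (a ⬝ᵥ a) * (b ⬝ᵥ b) = 1)
    (hWb : W *ᵥ b = 0) (haW : a ᵥ* W = 0) (hW : matSpectralNorm W < 1) {X : Matrix ι κ ℝ}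
    (hX : ∑ i, ∑ k, (c • vecMulVec a b + W) i k * X i k = nuclearNorm X) :
    X = (nuclearNorm X * c) • vecMulVec a b := by
  have hbb : b ⬝ᵥ b ≠ 0 := right_ne_zero_of_mul_eq_one hc
  have h := eq_smul_vecMulVec_mulVec_of_sum_sum_mul_eq_nuclearNorm
    (matSpectralNorm_smul_vecMulVec_add_le_one hc hWb haW hW.le)
    (fun _ => exists_eq_smul_of_dotProduct_mulVec_self_eq hc hWb haW hW) hX
  rw [smul_vecMulVec_add_mulVec hWb, smul_vecMulVec, smul_smul] at h
  convert h using 2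
  field_simp

end RankOnePerturbation

lemma charVec_dotProduct_self {ι : Type*} [Fintype ι] [DecidableEq ι] (S : Finset ι) :
    charVec S ⬝ᵥ charVec S = S.card := by
  simp [charVec, dotProduct]

lemma sum_charVec {ι : Type*} [Fintype ι] [DecidableEq ι] (S : Finset ι) :
    ∑ i, charVec S i = S.card := by
  simp [charVec]

lemma sum_sum_mul_vecMulVec {ι κ : Type*} [Fintype ι] [Fintype κ] (A : Matrix ι κ ℝ)
    (a : ι → ℝ) (b : κ → ℝ) : ∑ i, ∑ k, A i k * vecMulVec a b i k = a ⬝ᵥ (A *ᵥ b) := by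
  simp only [vecMulVec_apply, dotProduct, mulVec, Finset.mul_sum]
  exact Finset.sum_congr rfl fun i _ => Finset.sum_congr rfl fun k _ => by ring

lemma sum_sum_smul_one_add_mul_eq {ι κ : Type*} [Fintype ι] [Fintype κ] {E : Set (ι × κ)}
    {Λ X : Matrix ι κ ℝ} (μ : ℝ) (hΛ : ∀ i j, (i, j) ∈ E → Λ i j = 0)
    (hX : ∀ i j, (i, j) ∉ E → X i j = 0) :
    ∑ i, ∑ k, (μ • of (fun _ _ => (1 : ℝ)) + Λ : Matrix ι κ ℝ) i k * X i k =
      μ * ∑ i, ∑ k, X i k := by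
  simp only [Finset.mul_sum]
  refine Finset.sum_congr rfl fun i _ => Finset.sum_congr rfl fun k _ => ?_
  by_cases hik : (i, k) ∈ E
  · simp [hΛ i k hik]
  · simp [hX i k hik]

lemma nuclearNorm_smul_vecMulVec_charVec {ι κ : Type*} [Fintype ι] [Fintype κ] [DecidableEq ι]
    [DecidableEq κ] {c : ℝ} (hc : 0 ≤ c) (I : Finset ι) (J : Finset κ) :
    nuclearNorm (c • vecMulVec (charVec I) (charVec J)) = c * √(I.card * J.card : ℝ) := by
  rw [← smul_vecMulVec, nuclearNorm_vecMulVec, smul_dotProduct, dotProduct_smul,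
    charVec_dotProduct_self, charVec_dotProduct_self, smul_eq_mul, smul_eq_mul, ← mul_assoc,
    ← sq, mul_assoc, Real.sqrt_mul (sq_nonneg c), Real.sqrt_sq hc]

lemma eq_and_eq_of_vecMulVec_charVec_eq {ι κ : Type*} [DecidableEq ι] [DecidableEq κ]
    {I U : Finset ι} {J V : Finset κ} (hI : I.Nonempty) (hJ : J.Nonempty)
    (h : vecMulVec (charVec I) (charVec J) = vecMulVec (charVec U) (charVec V)) :
    I = U ∧ J = V := by
  have hprod : I ×ˢ J = U ×ˢ V := by
    ext ⟨i, k⟩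
    have hik := congrFun (congrFun h i) k
    simp only [vecMulVec_apply, charVec, mul_ite, ite_mul, one_mul, zero_mul, mul_zero] at hik
    simp only [Finset.mem_product]
    split_ifs at hik <;> simp_all
  have hUV : (U ×ˢ V).Nonempty := hprod ▸ hI.product hJ
  rw [Finset.nonempty_product] at hUV
  constructor
  · rw [← Finset.product_image_fst (s := I) hJ, hprod, Finset.product_image_fst hUV.2]
  · rw [← Finset.product_image_snd (t := J) hI, hprod, Finset.product_image_snd hUV.1]

section Biclique

variable {M N m n : ℕ} {E : Set (Fin M × Fin N)}

lemma feasR_smul_vecMulVec_charVec {I : Finset (Fin M)} {J : Finset (Fin N)}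
    (hIJ : ∀ i ∈ I, ∀ j ∈ J, (i, j) ∈ E) {c : ℝ} (hc : (m : ℝ) * n ≤ c * (I.card * J.card : ℝ)) :
    FeasR E m n (c • vecMulVec (charVec I) (charVec J)) := by
  refine ⟨?_, fun i j hij => ?_⟩
  · simpa [vecMulVec_apply, ← Finset.mul_sum, ← Finset.sum_mul, sum_charVec, mul_assoc]
      using hc
  · have : ¬ (i ∈ I ∧ j ∈ J) := fun h => hij (hIJ i h.1 j h.2)
    simp only [Matrix.smul_apply, vecMulVec_apply, charVec, smul_eq_mul]
    split_ifs <;> simp_all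

lemma card_mul_card_le_of_forall_feasR (hmn : 0 < m * n)
    (hlow : ∀ X, FeasR E m n X → √((m : ℝ) * n) ≤ nuclearNorm X) {I : Finset (Fin M)}
    {J : Finset (Fin N)} (hIJ : ∀ i ∈ I, ∀ j ∈ J, (i, j) ∈ E) : I.card * J.card ≤ m * n := by
  rcases Nat.eq_zero_or_pos (I.card * J.card) with hp | hp
  · exact hp ▸ Nat.zero_le _
  have hp' : (0 : ℝ) < I.card * J.card := by exact_mod_cast hp
  have hmn' : (0 : ℝ) < m * n := by exact_mod_cast hmn
  have h := hlow _ (feasR_smul_vecMulVec_charVec hIJ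
    (c := m * n / (I.card * J.card)) (div_mul_cancel₀ _ hp'.ne').ge)
  rw [nuclearNorm_smul_vecMulVec_charVec (by positivity), div_mul_eq_mul_div,
    le_div_iff₀ hp'] at h
  set q := √((I.card : ℝ) * J.card)
  set r := √((m : ℝ) * n)
  have hq : q * q = I.card * J.card := Real.mul_self_sqrt hp'.le
  have hr : r * r = m * n := Real.mul_self_sqrt hmn'.le
  rw [← hq, ← hr] at h
  have : q ≤ r := le_of_mul_le_mul_left (a := r * q) (by linarith) (by positivity)
  exact_mod_cast (Real.sqrt_le_sqrt_iff hmn'.le).mp this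

lemma eq_and_eq_of_forall_feasR {U : Finset (Fin M)} {V : Finset (Fin N)} (hmn : 0 < m * n)
    (huniq : ∀ X, FeasR E m n X → nuclearNorm X ≤ √((m : ℝ) * n) →
      X = vecMulVec (charVec U) (charVec V))
    {I : Finset (Fin M)} {J : Finset (Fin N)} (hIJ : ∀ i ∈ I, ∀ j ∈ J, (i, j) ∈ E)
    (hcard : I.card * J.card = m * n) : I = U ∧ J = V := by
  have hcard' : (I.card : ℝ) * J.card = m * n := by exact_mod_cast hcard
  have hI : I.Nonempty := Finset.card_pos.mp (Nat.pos_of_mul_pos_right (hcard ▸ hmn))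
  have hJ : J.Nonempty := Finset.card_pos.mp (Nat.pos_of_mul_pos_left (hcard ▸ hmn))
  have h := huniq _ (feasR_smul_vecMulVec_charVec hIJ (c := 1) (by rw [one_mul, hcard']))
    (by rw [nuclearNorm_smul_vecMulVec_charVec zero_le_one, one_mul, hcard'])
  rw [one_smul] at h
  exact eq_and_eq_of_vecMulVec_charVec_eq hI hJ h

variable {Ustar : Finset (Fin M)} {Vstar : Finset (Fin N)} {W Λ : Matrix (Fin M) (Fin N) ℝ}
  {μ : ℝ}

lemma multiplier_mul_eq_sqrt (hUm : Ustar.card = m) (hVn : Vstar.card = n)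
    (hbic : ∀ i ∈ Ustar, ∀ j ∈ Vstar, (i, j) ∈ E) (hWv : W *ᵥ charVec Vstar = 0)
    (hΛ : ∀ i j, (i, j) ∈ E → Λ i j = 0)
    (heq : (√((m : ℝ) * n))⁻¹ • vecMulVec (charVec Ustar) (charVec Vstar) + W
      = μ • of (fun _ _ => (1 : ℝ)) + Λ) :
    μ * (m * n) = √((m : ℝ) * n) := by
  have hX : FeasR E m n (vecMulVec (charVec Ustar) (charVec Vstar)) := by
    simpa using feasR_smul_vecMulVec_charVec hbic (c := 1) (by simp [hUm, hVn])
  have h := sum_sum_smul_one_add_mul_eq μ hΛ hX.2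
  rw [← heq, sum_sum_mul_vecMulVec, smul_vecMulVec_add_mulVec hWv, dotProduct_smul,
    charVec_dotProduct_self, charVec_dotProduct_self, hUm, hVn] at h
  simp only [vecMulVec_apply, ← Finset.mul_sum, ← Finset.sum_mul, sum_charVec, hUm, hVn,
    smul_eq_mul] at h
  set r := √((m : ℝ) * n)
  have hr : r * r = m * n := Real.mul_self_sqrt (by positivity)
  rw [← h, mul_assoc, mul_comm (n : ℝ), ← hr, ← mul_assoc, inv_mul_mul_self]

lemma sqrt_le_sum_sum_mul_of_feasR (hmn : 0 < m * n) (hUm : Ustar.card = m)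
    (hVn : Vstar.card = n) (hbic : ∀ i ∈ Ustar, ∀ j ∈ Vstar, (i, j) ∈ E)
    (hWv : W *ᵥ charVec Vstar = 0) (hΛ : ∀ i j, (i, j) ∈ E → Λ i j = 0)
    (heq : (√((m : ℝ) * n))⁻¹ • vecMulVec (charVec Ustar) (charVec Vstar) + W
      = μ • of (fun _ _ => (1 : ℝ)) + Λ) {X : Matrix (Fin M) (Fin N) ℝ} (hX : FeasR E m n X) :
    √((m : ℝ) * n) ≤ ∑ i, ∑ k,
      ((√((m : ℝ) * n))⁻¹ • vecMulVec (charVec Ustar) (charVec Vstar) + W) i k * X i k := by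
  have hμ := multiplier_mul_eq_sqrt hUm hVn hbic hWv hΛ heq
  have hμ0 : 0 ≤ μ :=
    (mul_nonneg_iff_of_pos_right (by exact_mod_cast hmn)).mp (hμ ▸ Real.sqrt_nonneg _)
  rw [heq, sum_sum_smul_one_add_mul_eq μ hΛ hX.2, ← hμ]
  exact mul_le_mul_of_nonneg_left hX.1 hμ0

end Biclique

theorem biclique_relaxation_optimality_general
    (M N m n : ℕ) (hm : 1 ≤ m) (hn : 1 ≤ n)
    (E : Set (Fin M × Fin N))
    (Ustar : Finset (Fin M)) (Vstar : Finset (Fin N))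
    (hUm : Ustar.card = m) (hVn : Vstar.card = n)
    (hbic : ∀ i ∈ Ustar, ∀ j ∈ Vstar, (i, j) ∈ E)
    (W Λ : Matrix (Fin M) (Fin N) ℝ) (μ : ℝ)
    (hWv : W *ᵥ charVec Vstar = 0)
    (hWu : charVec Ustar ᵥ* W = 0)
    (hWnorm : matSpectralNorm W ≤ 1)
    (hΛ : ∀ i j, (i, j) ∈ E → Λ i j = 0)
    (heq : (Real.sqrt ((m : ℝ) * n))⁻¹ • vecMulVec (charVec Ustar) (charVec Vstar) + W
         = μ • Matrix.of (fun _ _ => (1 : ℝ)) + Λ) :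
    ((∀ X : Matrix (Fin M) (Fin N) ℝ, FeasR E m n X →
        nuclearNorm X ≥ nuclearNorm (vecMulVec (charVec Ustar) (charVec Vstar))) ∧
     (∀ (I : Finset (Fin M)) (J : Finset (Fin N)),
        (∀ i ∈ I, ∀ j ∈ J, (i, j) ∈ E) → I.card * J.card ≤ m * n)) ∧
    (matSpectralNorm W < 1 → 0 < μ →
      (∀ X : Matrix (Fin M) (Fin N) ℝ, FeasR E m n X →
          X ≠ vecMulVec (charVec Ustar) (charVec Vstar) →
          nuclearNorm X > nuclearNorm (vecMulVec (charVec Ustar) (charVec Vstar))) ∧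
      (∀ (I : Finset (Fin M)) (J : Finset (Fin N)),
        (∀ i ∈ I, ∀ j ∈ J, (i, j) ∈ E) → I.card * J.card = m * n →
        I = Ustar ∧ J = Vstar)) := by
  set r := √((m : ℝ) * n)
  set Xstar := vecMulVec (charVec Ustar) (charVec Vstar)
  have hmn : 0 < m * n := Nat.mul_pos hm hn
  have hr : r ≠ 0 := (Real.sqrt_pos.mpr (by exact_mod_cast hmn)).ne'
  have hc : r⁻¹ ^ 2 * (charVec Ustar ⬝ᵥ charVec Ustar) * (charVec Vstar ⬝ᵥ charVec Vstar) = 1 := by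
    rw [charVec_dotProduct_self, charVec_dotProduct_self, hUm, hVn, mul_assoc, inv_pow,
      Real.sq_sqrt (by positivity), inv_mul_cancel₀ (by positivity)]
  have hY := matSpectralNorm_smul_vecMulVec_add_le_one hc hWv hWu hWnorm
  have hpair := fun X (hX : FeasR E m n X) =>
    sqrt_le_sum_sum_mul_of_feasR hmn hUm hVn hbic hWv hΛ heq hX
  have hXstar : nuclearNorm Xstar = r := by
    rw [nuclearNorm_vecMulVec, charVec_dotProduct_self, charVec_dotProduct_self, hUm, hVn]
  have hlow : ∀ X, FeasR E m n X → r ≤ nuclearNorm X := fun X hX =>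
    (hpair X hX).trans (sum_sum_mul_le_nuclearNorm hY X)
  have huniq (hW : matSpectralNorm W < 1) X (hX : FeasR E m n X) (hXr : nuclearNorm X ≤ r) :
      X = Xstar := by
    rw [eq_smul_vecMulVec_of_sum_sum_mul_eq_nuclearNorm hc hWv hWu hW
      (le_antisymm (sum_sum_mul_le_nuclearNorm hY X) (hXr.trans (hpair X hX))),
      le_antisymm hXr (hlow X hX), mul_inv_cancel₀ hr, one_smul]
  refine ⟨⟨fun X hX => hXstar ▸ hlow X hX, fun I J => card_mul_card_le_of_forall_feasR hmn hlow⟩,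
    fun hW _ => ⟨fun X hX hne => ?_, fun I J => eq_and_eq_of_forall_feasR hmn (huniq hW)⟩⟩
  exact hXstar ▸ lt_of_not_ge fun hXr => hne (huniq hW X hX hXr)

/-- KKT conditions for the biclique relaxation (B). Under the stated
multiplier conditions, `X* = ū v̄ᵀ` is optimal for (B) and `G` has no biclique with more
than `mn` edges; if moreover `‖W‖ < 1` and `μ > 0`, then `X*` is the unique optimizer of
(B) and `U* × V*` is the unique biclique of `G` with `mn` edges. -/
theorem biclique_relaxation_optimality
    (M N m n : ℕ) (hm : 1 ≤ m) (hn : 1 ≤ n)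
    (E : Set (Fin M × Fin N))
    (Ustar : Finset (Fin M)) (Vstar : Finset (Fin N))
    (hUm : Ustar.card = m) (hVn : Vstar.card = n)
    (hbic : ∀ i ∈ Ustar, ∀ j ∈ Vstar, (i, j) ∈ E)
    (W Λ : Matrix (Fin M) (Fin N) ℝ) (μ : ℝ) (hμ : 0 ≤ μ)
    (hWv : W *ᵥ charVec Vstar = 0)
    (hWu : charVec Ustar ᵥ* W = 0)
    (hWnorm : matSpectralNorm W ≤ 1)
    (hΛ : ∀ i j, (i, j) ∈ E → Λ i j = 0)
    (heq : (Real.sqrt ((m : ℝ) * n))⁻¹ • vecMulVec (charVec Ustar) (charVec Vstar) + W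
         = μ • Matrix.of (fun _ _ => (1 : ℝ)) + Λ) :
    ((∀ X : Matrix (Fin M) (Fin N) ℝ, FeasR E m n X →
        nuclearNorm X ≥ nuclearNorm (vecMulVec (charVec Ustar) (charVec Vstar))) ∧
     (∀ (I : Finset (Fin M)) (J : Finset (Fin N)),
        (∀ i ∈ I, ∀ j ∈ J, (i, j) ∈ E) → I.card * J.card ≤ m * n)) ∧
    (matSpectralNorm W < 1 → 0 < μ →
      (∀ X : Matrix (Fin M) (Fin N) ℝ, FeasR E m n X →
          X ≠ vecMulVec (charVec Ustar) (charVec Vstar) →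
          nuclearNorm X > nuclearNorm (vecMulVec (charVec Ustar) (charVec Vstar))) ∧
      (∀ (I : Finset (Fin M)) (J : Finset (Fin N)),
        (∀ i ∈ I, ∀ j ∈ J, (i, j) ∈ E) → I.card * J.card = m * n →
        I = Ustar ∧ J = Vstar)) :=
  biclique_relaxation_optimality_general M N m n hm hn E Ustar Vstar hUm hVn hbic W Λ μ hWv hWu
    hWnorm hΛ heq
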